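/- Let L be a split regular Hom-Lie superalgebra and let ~ be the connection relation on the root system Λ, where α ~ β iff there exists a connection from α to β. Then ~ is an equivalence relation on Λ. -/

import Mathlib

/-- The super sign `(-1)^{ij}` for `i j : ZMod 2`, valued in a field `K`. -/
def ssign (K : Type*) [Field K] (i j : ZMod 2) : K :=
  if i = 1 ∧ j = 1 then -1 else 1

/-- A split regular Hom-Lie superalgebra over a field `K`:
a `ZMod 2`-graded vector space `L` with a bilinear bracket and an even
automorphism `φ` satisfying skew-supersymmetry and the super Hom-Jacobi
identity, together with a maximal abelian graded subalgebra `H`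
(with respect to which `L` will be split). -/
structure SplitRegularHomLieSuperalgebra (K L : Type*) [Field K]
    [AddCommGroup L] [Module K L] where
  bracket : L →ₗ[K] L →ₗ[K] L
  φ : L ≃ₗ[K] L
  Lg : ZMod 2 → Submodule K L
  grading_sup : Lg 0 ⊔ Lg 1 = ⊤
  grading_disjoint : Lg 0 ⊓ Lg 1 = ⊥
  φ_even : ∀ i, Submodule.map (φ : L →ₗ[K] L) (Lg i) = Lg i
  φ_bracket : ∀ x y, φ (bracket x y) = bracket (φ x) (φ y)
  skew : ∀ (i j : ZMod 2), ∀ x ∈ Lg i, ∀ y ∈ Lg j,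
    bracket x y = -(ssign K i j) • bracket y x
  jacobi : ∀ (i j k : ZMod 2), ∀ x ∈ Lg i, ∀ y ∈ Lg j, ∀ z ∈ Lg k,
    ssign K i k • bracket (bracket x y) (φ z)
      + ssign K i j • bracket (bracket y z) (φ x)
      + ssign K j k • bracket (bracket z x) (φ y) = 0
  H : Submodule K L
  H_graded : H = (H ⊓ Lg 0) ⊔ (H ⊓ Lg 1)
  H_abelian : ∀ x ∈ H, ∀ y ∈ H, bracket x y = 0
  φ_H : Submodule.map (φ : L →ₗ[K] L) H = H
  H_max : ∀ A : Submodule K L, (A = (A ⊓ Lg 0) ⊔ (A ⊓ Lg 1)) →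
    (∀ x ∈ A, ∀ y ∈ A, bracket x y = 0) →
    Submodule.map (φ : L →ₗ[K] L) A = A → H ≤ A → A = H
  /-- the restriction of `φ` to `H₀ = H ⊓ L₀` as a linear automorphism -/
  φH0 : ↥(H ⊓ Lg 0) ≃ₗ[K] ↥(H ⊓ Lg 0)
  φH0_coe : ∀ h : ↥(H ⊓ Lg 0), (φH0 h : L) = φ (h : L)

namespace SplitRegularHomLieSuperalgebra

variable {K L : Type*} [Field K] [AddCommGroup L] [Module K L]
variable (D : SplitRegularHomLieSuperalgebra K L)

/-- The even part `H₀` of `H`. -/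
abbrev H0 : Submodule K L := D.H ⊓ D.Lg 0

/-- The root space associated to a linear functional `α : H₀ → K`. -/
def rootSpace (α : ↥D.H0 →ₗ[K] K) : Submodule K L where
  carrier := {v | ∀ h : ↥D.H0, D.bracket h v = α h • D.φ v}
  add_mem' := by
    intro a b ha hb h
    simp only [map_add, ha h, hb h, smul_add]
  zero_mem' := by
    intro h
    simp
  smul_mem' := by
    intro c x hx h
    simp only [map_smul, hx h, smul_comm c (α h)]

/-- The root system: the set of nonzero functionals with nonzero root space. -/
def Λ : Set (↥D.H0 →ₗ[K] K) := {α | α ≠ 0 ∧ D.rootSpace α ≠ ⊥}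

/-- The twist `α ∘ φ^z` of a functional by an integer power of `φ` (restricted
to `H₀`). -/
def twist (α : ↥D.H0 →ₗ[K] K) (z : ℤ) : ↥D.H0 →ₗ[K] K :=
  α.comp ((D.φH0 ^ z : ↥D.H0 ≃ₗ[K] ↥D.H0) : ↥D.H0 →ₗ[K] ↥D.H0)

/-- The subspace spanned by all brackets `[a,b]` with `a ∈ A`, `b ∈ B`. -/
def bracketSpan (A B : Submodule K L) : Submodule K L :=
  Submodule.span K {z | ∃ a ∈ A, ∃ b ∈ B, z = D.bracket a b}

/-- `±Λ = Λ ∪ (−Λ)`. -/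
def pmΛ : Set (↥D.H0 →ₗ[K] K) := {γ | γ ∈ D.Λ ∨ -γ ∈ D.Λ}

/-- The partial sums appearing in the definition of a connection:
`theta a 0 = a 0` and `theta a (i+1) = (theta a i + a (i+1)) ∘ φ⁻¹`. -/
def theta (a : ℕ → (↥D.H0 →ₗ[K] K)) : ℕ → (↥D.H0 →ₗ[K] K)
  | 0 => a 0
  | i + 1 => D.twist (theta a i + a (i + 1)) (-1)

/-- `α` is connected to `β`. -/
def Connected (α β : ↥D.H0 →ₗ[K] K) : Prop :=
  ∃ (k : ℕ) (a : ℕ → (↥D.H0 →ₗ[K] K)), 1 ≤ k ∧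
    (∀ i < k, a i ∈ D.pmΛ) ∧
    (∃ n : ℕ, a 0 = D.twist α (-(n : ℤ))) ∧
    (∀ i, 1 ≤ i → i + 1 ≤ k - 1 → D.theta a i ∈ D.pmΛ) ∧
    (∃ m : ℕ, D.theta a (k - 1) = D.twist β (-(m : ℤ)) ∨
              D.theta a (k - 1) = -(D.twist β (-(m : ℤ))))

/-- The connection class `[α]` of a root `α`. -/
def rootClass (α : ↥D.H0 →ₗ[K] K) : Set (↥D.H0 →ₗ[K] K) :=
  {β ∈ D.Λ | D.Connected α β}

/-- `H_{[α]} = span {[L_β, L_{−β}] : β ∈ [α]}`. -/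
def Hclass (α : ↥D.H0 →ₗ[K] K) : Submodule K L :=
  ⨆ β ∈ D.rootClass α, D.bracketSpan (D.rootSpace β) (D.rootSpace (-β))

/-- `V_{[α]} = ⊕_{β ∈ [α]} L_β`. -/
def Vclass (α : ↥D.H0 →ₗ[K] K) : Submodule K L :=
  ⨆ β ∈ D.rootClass α, D.rootSpace β

/-- `L_{[α]} = H_{[α]} ⊕ V_{[α]}`. -/
def Lclass (α : ↥D.H0 →ₗ[K] K) : Submodule K L :=
  D.Hclass α ⊔ D.Vclass α

/-- The center `Z(L) = {v : [v, L] = 0}`. -/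
def center : Submodule K L where
  carrier := {v | ∀ y : L, D.bracket v y = 0}
  add_mem' := by
    intro a b ha hb y
    simp only [map_add, LinearMap.add_apply, ha y, hb y, add_zero]
  zero_mem' := by
    intro y
    simp
  smul_mem' := by
    intro c x hx y
    simp only [map_smul, LinearMap.smul_apply, hx y, smul_zero]

/-- An ideal: a graded, `φ`-invariant subspace `I` with `[I,L] ⊆ I`. -/
def IsIdeal (I : Submodule K L) : Prop :=
  (I = (I ⊓ D.Lg 0) ⊔ (I ⊓ D.Lg 1)) ∧
  (∀ x ∈ I, ∀ y : L, D.bracket x y ∈ I) ∧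
  Submodule.map (D.φ : L →ₗ[K] L) I = I

/-- Simplicity: `[L,L] ≠ 0` and the only ideals are `0` and `L`. -/
def IsSimple : Prop :=
  (¬ ∀ x y : L, D.bracket x y = 0) ∧
  ∀ I : Submodule K L, D.IsIdeal I → I = ⊥ ∨ I = ⊤

end SplitRegularHomLieSuperalgebra

/-- The split condition: `L = H ⊕ (⊕_{α ∈ Λ} L_α)` as an internal direct sum. -/
structure IsSplitDecomposition {K L : Type*} [Field K] [AddCommGroup L]
    [Module K L] (D : SplitRegularHomLieSuperalgebra K L) : Prop where
  sup_eq_top : D.H ⊔ (⨆ α ∈ D.Λ, D.rootSpace α) = ⊤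
  disjoint_H : Disjoint D.H (⨆ α ∈ D.Λ, D.rootSpace α)
  disjoint_root : ∀ α ∈ D.Λ, Disjoint (D.rootSpace α)
    (D.H ⊔ ⨆ β ∈ {β ∈ D.Λ | β ≠ α}, D.rootSpace β)

/-! Reflexivity is witnessed by the one-term chain. For transitivity, the two chains are
concatenated after twisting the first by the power of `φ` that starts the second, and the
second by the signed power of `φ` that ends the first; then the last partial sum of the first
chain and the first term of the second agree. For symmetry, the chain is
read backwards: the recursion `θᵢ = (θᵢ₋₁ + aᵢ) ∘ φ⁻¹` gives `θᵢ₋₁ = θᵢ ∘ φ - aᵢ`, and twisting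
the `j`-th reversed term by `φ^{-(2j-1)}` turns this back into the forward recursion, with
`θⱼ` of the reversed chain equal to `θₙ₋ⱼ ∘ φ^{-2j}`. -/

theorem eq_or_eq_neg_iff_exists_smul {K V : Type*} [Ring K] [NoZeroDivisors K]
    [AddCommGroup V] [Module K V] {x y : V} :
    (x = y ∨ x = -y) ↔ ∃ σ : K, σ * σ = 1 ∧ x = σ • y := by
  constructor
  · rintro (rfl | rfl)
    · exact ⟨1, one_mul 1, (one_smul K x).symm⟩
    · exact ⟨-1, by simp, (neg_one_smul K y).symm⟩
  · rintro ⟨σ, hσ, rfl⟩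
    rcases mul_self_eq_one_iff.mp hσ with rfl | rfl <;> simp

namespace SplitRegularHomLieSuperalgebra

variable {K L : Type*} [Field K] [AddCommGroup L] [Module K L]
  (D : SplitRegularHomLieSuperalgebra K L)

section Twist

variable (α β : ↥D.H0 →ₗ[K] K) (z w : ℤ)

@[simp]
theorem twist_apply (h : ↥D.H0) : D.twist α z h = α ((D.φH0 ^ z) h) := rfl

@[simp]
theorem twist_zero : D.twist α 0 = α := by
  ext; simp

theorem twist_twist : D.twist (D.twist α z) w = D.twist α (z + w) := by
  ext; simp [zpow_add]

theorem twist_add : D.twist (α + β) z = D.twist α z + D.twist β z :=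
  LinearMap.add_comp _ _ _

theorem twist_neg : D.twist (-α) z = -D.twist α z :=
  LinearMap.neg_comp _ _

theorem twist_smul (c : K) : D.twist (c • α) z = c • D.twist α z :=
  LinearMap.smul_comp _ _ _

theorem twist_twist_neg_natCast (m n : ℕ) :
    D.twist (D.twist α (-m)) (-n) = D.twist α (-(m + n : ℕ)) := by
  rw [twist_twist]
  congr 1
  push_cast
  ring

theorem twist_eq_zero_iff : D.twist α z = 0 ↔ α = 0 := by
  refine ⟨fun h => ?_, fun h => by rw [h]; exact LinearMap.zero_comp _⟩
  rw [← D.twist_zero α, ← add_neg_cancel z, ← twist_twist, h]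
  exact LinearMap.zero_comp _

end Twist

section Roots

variable {α : ↥D.H0 →ₗ[K] K}

theorem φ_mem_rootSpace_iff {v : L} :
    D.φ v ∈ D.rootSpace α ↔ v ∈ D.rootSpace (D.twist α 1) := by
  change (∀ h : ↥D.H0, _) ↔ ∀ h : ↥D.H0, _
  rw [← D.φH0.toEquiv.forall_congr_right]
  refine forall_congr' fun h => ?_
  rw [twist_apply, zpow_one, LinearEquiv.coe_toEquiv, D.φH0_coe, ← D.φ_bracket, ← map_smul,
    D.φ.injective.eq_iff]

theorem rootSpace_twist_one :
    D.rootSpace (D.twist α 1) = (D.rootSpace α).map (D.φ.symm : L →ₗ[K] L) := by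
  ext v
  rw [Submodule.mem_map_equiv, LinearEquiv.symm_symm, φ_mem_rootSpace_iff]

theorem twist_one_mem_Λ_iff : D.twist α 1 ∈ D.Λ ↔ α ∈ D.Λ := by
  simp only [Λ, Set.mem_ofPred_eq, ne_eq, twist_eq_zero_iff, rootSpace_twist_one,
    Submodule.map_eq_bot_iff]

theorem twist_mem_Λ_iff (z : ℤ) : D.twist α z ∈ D.Λ ↔ α ∈ D.Λ := by
  induction z using Int.induction_on with
  | zero => rw [twist_zero]
  | succ n ih => rw [← twist_twist, twist_one_mem_Λ_iff, ih]
  | pred n ih => rw [← ih, ← twist_one_mem_Λ_iff, twist_twist, sub_add_cancel]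

end Roots

section SignedRoots

variable {γ : ↥D.H0 →ₗ[K] K}

theorem neg_mem_pmΛ_iff : -γ ∈ D.pmΛ ↔ γ ∈ D.pmΛ := by
  simp only [pmΛ, Set.mem_ofPred_eq, neg_neg, or_comm]

theorem twist_mem_pmΛ_iff (z : ℤ) : D.twist γ z ∈ D.pmΛ ↔ γ ∈ D.pmΛ := by
  simp only [pmΛ, Set.mem_ofPred_eq, ← twist_neg, twist_mem_Λ_iff]

theorem smul_mem_pmΛ {σ : K} (hσ : σ * σ = 1) (h : γ ∈ D.pmΛ) : σ • γ ∈ D.pmΛ := by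
  rcases mul_self_eq_one_iff.mp hσ with rfl | rfl
  · rwa [one_smul]
  · rwa [show (-1 : K) • γ = -γ from neg_one_smul K γ, neg_mem_pmΛ_iff]

end SignedRoots

section Theta

variable (a b : ℕ → ↥D.H0 →ₗ[K] K)

theorem theta_zero : D.theta a 0 = a 0 := rfl

theorem theta_succ (i : ℕ) : D.theta a (i + 1) = D.twist (D.theta a i + a (i + 1)) (-1) := rfl

theorem theta_congr {i : ℕ} (h : ∀ j ≤ i, a j = b j) : D.theta a i = D.theta b i := by
  induction i with
  | zero => exact h 0 le_rfl
  | succ i ih =>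
    rw [theta_succ, theta_succ, ih fun j hj => h j (hj.trans i.le_succ), h (i + 1) le_rfl]

theorem theta_twist (z : ℤ) (i : ℕ) :
    D.theta (fun j => D.twist (a j) z) i = D.twist (D.theta a i) z := by
  induction i with
  | zero => rfl
  | succ i ih => rw [theta_succ, theta_succ, ih, ← twist_add, twist_twist, twist_twist, add_comm z]

theorem theta_smul (c : K) (i : ℕ) : D.theta (fun j => c • a j) i = c • D.theta a i := by
  induction i with
  | zero => rfl
  | succ i ih => rw [theta_succ, theta_succ, ih, ← smul_add, twist_smul]

theorem theta_add {i : ℕ} (h₀ : D.theta a i = b 0) (h : ∀ j, a (i + j + 1) = b (j + 1))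
    (j : ℕ) : D.theta a (i + j) = D.theta b j := by
  induction j with
  | zero => exact h₀
  | succ j ih => rw [← add_assoc, theta_succ, theta_succ, ih, h]

theorem theta_reverse {n : ℕ} (h₀ : b 0 = D.theta a n)
    (h : ∀ i j, i + j + 1 = n → b (j + 1) = -D.twist (a (i + 1)) (-(2 * j + 1)))
    (i j : ℕ) (hij : i + j = n) : D.theta b j = D.twist (D.theta a i) (-(2 * j)) := by
  induction j generalizing i with
  | zero => simp [theta_zero, h₀, ← hij]
  | succ j ih =>
    have hexp : (-(2 * j + 1) : ℤ) = -1 + -(2 * j) := by ring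
    rw [theta_succ, ih (i + 1) (by omega), h i j (by omega), theta_succ, twist_twist, hexp,
      twist_add _ (D.theta a i), add_neg_cancel_right, twist_twist]
    congr 1
    push_cast
    ring

end Theta

section Connection

variable {α β γ : ↥D.H0 →ₗ[K] K}

/-- The chain is indexed by `0, …, n`, i.e. `k = n + 1`. -/
theorem connected_iff : D.Connected α β ↔ ∃ (n : ℕ) (a : ℕ → ↥D.H0 →ₗ[K] K),
    (∀ i ≤ n, a i ∈ D.pmΛ) ∧ (∃ p : ℕ, a 0 = D.twist α (-p)) ∧
    (∀ i < n, D.theta a i ∈ D.pmΛ) ∧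
    ∃ (m : ℕ) (σ : K), σ * σ = 1 ∧ D.theta a n = σ • D.twist β (-m) := by
  simp only [Connected, eq_or_eq_neg_iff_exists_smul (K := K)]
  constructor
  · rintro ⟨k, a, hk, ha, ha₀, hθ, hend⟩
    obtain ⟨n, rfl⟩ := Nat.exists_eq_add_of_le' hk
    refine ⟨n, a, fun i hi => ha i (by omega), ha₀, fun i hi => ?_, hend⟩
    rcases i with _ | i
    · exact ha 0 (by omega)
    · exact hθ (i + 1) (by omega) (by omega)
  · rintro ⟨n, a, ha, ha₀, hθ, hend⟩
    exact ⟨n + 1, a, by omega, fun i hi => ha i (by omega), ha₀,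
      fun i _ hi => hθ i (by omega), hend⟩

theorem connected_refl (hα : α ∈ D.pmΛ) : D.Connected α α :=
  D.connected_iff.mpr ⟨0, fun _ => α, fun _ _ => hα, ⟨0, by simp⟩,
    fun _ h => absurd h (Nat.not_lt_zero _), 0, 1, one_mul 1, by simp [theta_zero]⟩

theorem connected_symm (hβ : β ∈ D.pmΛ) (h : D.Connected α β) : D.Connected β α := by
  obtain ⟨n, a, ha, ⟨p, ha₀⟩, hθ, m, σ, hσ, hend⟩ := D.connected_iff.mp h
  let b : ℕ → ↥D.H0 →ₗ[K] K := fun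
    | 0 => D.theta a n
    | j + 1 => -D.twist (a (n - j)) (-(2 * j + 1))
  have hθb : ∀ i j, i + j = n → D.theta b j = D.twist (D.theta a i) (-(2 * j)) :=
    D.theta_reverse a b rfl fun i j hij => by
      change -D.twist (a (n - j)) _ = _
      rw [show n - j = i + 1 by omega]
  have hb : ∀ i ≤ n, σ • b i ∈ D.pmΛ := by
    rintro (_ | j) hj <;> apply D.smul_mem_pmΛ hσ
    · change D.theta a n ∈ D.pmΛ
      rw [hend]
      exact D.smul_mem_pmΛ hσ ((D.twist_mem_pmΛ_iff _).mpr hβ)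
    · exact D.neg_mem_pmΛ_iff.mpr ((D.twist_mem_pmΛ_iff _).mpr (ha _ (by omega)))
  refine D.connected_iff.mpr
    ⟨n, fun j => σ • b j, hb, ⟨m, ?_⟩, fun i hi => ?_, p + 2 * n, σ, hσ, ?_⟩
  · change σ • D.theta a n = _
    rw [hend, smul_smul, hσ, one_smul]
  · rcases i with _ | i
    · exact hb 0 (Nat.zero_le n)
    · rw [theta_smul, hθb (n - (i + 1)) (i + 1) (by omega)]
      exact D.smul_mem_pmΛ hσ ((D.twist_mem_pmΛ_iff _).mpr (hθ _ (by omega)))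
  · rw [theta_smul, hθb 0 n (zero_add n), theta_zero, ha₀, twist_twist]
    congr 2
    push_cast
    ring

theorem connected_trans (h₁ : D.Connected α β) (h₂ : D.Connected β γ) : D.Connected α γ := by
  obtain ⟨p, a, ha, ⟨r, ha₀⟩, hθa, m, σ, hσ, hend⟩ := D.connected_iff.mp h₁
  obtain ⟨q, b, hb, ⟨s, hb₀⟩, hθb, m', τ, hτ, hend'⟩ := D.connected_iff.mp h₂
  let c : ℕ → ↥D.H0 →ₗ[K] K := fun i =>
    if i ≤ p then D.twist (a i) (-s) else σ • D.twist (b (i - p)) (-m)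
  have hθc_le : ∀ i ≤ p, D.theta c i = D.twist (D.theta a i) (-s) := fun i hi =>
    (D.theta_congr _ _ fun j hj => if_pos (hj.trans hi)).trans (D.theta_twist a _ i)
  have hθc_add : ∀ j, D.theta c (p + j) = σ • D.twist (D.theta b j) (-m) := by
    intro j
    rw [D.theta_add c (fun j => σ • D.twist (b j) (-m)) ?_ (fun j => ?_) j, theta_smul,
      theta_twist]
    · rw [hθc_le p le_rfl, hend, hb₀, twist_smul, twist_twist_neg_natCast,
        twist_twist_neg_natCast, add_comm]
    · simp only [c, if_neg (show ¬p + j + 1 ≤ p by omega), show p + j + 1 - p = j + 1 by omega]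
  refine D.connected_iff.mpr ⟨p + q, c, fun i hi => ?_, ⟨r + s, ?_⟩, fun i hi => ?_, m' + m,
    σ * τ, by rw [mul_mul_mul_comm, hσ, hτ, one_mul], ?_⟩
  · by_cases hip : i ≤ p
    · simp only [c, if_pos hip, twist_mem_pmΛ_iff, ha i hip]
    · simp only [c, if_neg hip]
      exact D.smul_mem_pmΛ hσ ((D.twist_mem_pmΛ_iff _).mpr (hb _ (by omega)))
  · simp only [c, if_pos (Nat.zero_le p)]
    rw [ha₀, twist_twist_neg_natCast]
  · by_cases hip : i < p
    · rw [hθc_le i hip.le]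
      exact (D.twist_mem_pmΛ_iff _).mpr (hθa i hip)
    · obtain ⟨j, rfl⟩ := Nat.exists_eq_add_of_le (not_lt.mp hip)
      rw [hθc_add]
      exact D.smul_mem_pmΛ hσ ((D.twist_mem_pmΛ_iff _).mpr (hθb j (by omega)))
  · rw [hθc_add, hend', twist_smul, twist_twist_neg_natCast, smul_smul]

end Connection

end SplitRegularHomLieSuperalgebra

theorem stmt_7_general {K L : Type*} [Field K] [AddCommGroup L] [Module K L]
    (D : SplitRegularHomLieSuperalgebra K L) :
    Equivalence (fun (α β : ↥D.Λ) => D.Connected α.1 β.1) :=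
  ⟨fun α => D.connected_refl (Or.inl α.2), fun {_ β} h => D.connected_symm (Or.inl β.2) h,
    D.connected_trans⟩

/-- the connection relation is an equivalence relation on `Λ`. -/
theorem stmt_7 {K L : Type*} [Field K] [AddCommGroup L] [Module K L]
    (D : SplitRegularHomLieSuperalgebra K L) (hsplit : IsSplitDecomposition D) :
    Equivalence (fun (α β : ↥D.Λ) => D.Connected α.1 β.1) :=
  stmt_7_general D
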